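/- Let I = (𝔼, D, c, f) be a CMP instance whose objective f is of type product. Then for every e ∈ 𝔼 it holds that l'(I,e) = ((f(D+(e)) − f(I)) / f(D+(e))) · c(e), where the right-hand side is interpreted as c(e) when D+(e) = ∅ (so that f(D+(e)) = ∞). -/

import Mathlib

open scoped ENNReal BigOperators

/-- Objective type of a combinatorial minimization problem:
sum, product, or bottleneck. -/
inductive ObjType where
  | sum : ObjType
  | prod : ObjType
  | bottleneck : ObjType
deriving DecidableEq

/-- The cost `f_c(S)` of a feasible solution `S` under cost function `c`:
the sum, the product, or the maximum (for nonempty `S`) of the element costs. -/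
noncomputable def objCost {ι : Type*} (t : ObjType) (c : ι → ℝ) (S : Finset ι) : ℝ :=
  match t with
  | ObjType.sum => ∑ e ∈ S, c e
  | ObjType.prod => ∏ e ∈ S, c e
  | ObjType.bottleneck => if h : S.Nonempty then S.sup' h c else 0

/-- The optimal objective value `f(I)` of the instance with feasible set `D`. -/
noncomputable def optVal {ι : Type*} (t : ObjType) (c : ι → ℝ) (D : Finset (Finset ι)) : ℝ :=
  if h : D.Nonempty then D.inf' h (objCost t c) else 0

/-- `S` is an optimal solution of the instance `(𝔼, D, c, f)`. -/
def isOpt {ι : Type*} (t : ObjType) (c : ι → ℝ) (D : Finset (Finset ι)) (S : Finset ι) : Prop :=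
  S ∈ D ∧ objCost t c S = optVal t c D

/-- `0 ≤ a < maxdec(e)`, where `maxdec(e) = ∞` for sum/bottleneck objectives and
`maxdec(e) = c(e)` for the product objective. -/
def decOK {ι : Type*} (t : ObjType) (c : ι → ℝ) (e : ι) (a : ℝ) : Prop :=
  0 ≤ a ∧ (t = ObjType.prod → a < c e)

/-- Extended single upper tolerance
`u'(I,e) = sup {α ≥ 0 : every optimal solution of I is optimal for I_{α,e}}` valued in `[0,∞]`. -/
noncomputable def uTol {ι : Type*} [DecidableEq ι] (t : ObjType) (c : ι → ℝ)
    (D : Finset (Finset ι)) (e : ι) : ℝ≥0∞ :=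
  sSup (ENNReal.ofReal '' {a : ℝ | 0 ≤ a ∧
    ∀ S : Finset ι, isOpt t c D S →
      isOpt t (fun x => if x = e then c x + a else c x) D S})

/-- Extended regular set upper tolerance `u'(I,E)`, valued in `[0,∞]`. -/
noncomputable def uTolSet {ι : Type*} [DecidableEq ι] (t : ObjType) (c : ι → ℝ)
    (D : Finset (Finset ι)) (E : Finset ι) : ℝ≥0∞ :=
  sSup (ENNReal.ofReal '' {a : ℝ |
    ∀ S : Finset ι, isOpt t c D S →
      ∃ α : ι → ℝ, (∀ x, 0 ≤ α x) ∧ (∀ x ∉ E, α x = 0) ∧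
        a = ∑ x ∈ E, α x ∧ isOpt t (fun x => c x + α x) D S})

/-- Extended reverse set upper tolerance `u_b'(I,E)`, valued in `[0,∞]` (`inf ∅ = ∞`). -/
noncomputable def uTolSetRev {ι : Type*} [DecidableEq ι] (t : ObjType) (c : ι → ℝ)
    (D : Finset (Finset ι)) (E : Finset ι) : ℝ≥0∞ :=
  sInf (ENNReal.ofReal '' {a : ℝ |
    ∃ S : Finset ι, isOpt t c D S ∧
      ∃ α : ι → ℝ, (∀ x, 0 ≤ α x) ∧ (∀ x ∉ E, α x = 0) ∧
        a = ∑ x ∈ E, α x ∧ ¬ isOpt t (fun x => c x + α x) D S})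

/-- New single lower tolerance
`l'(I,e) = sup {α : 0 ≤ α < maxdec(e), f(I_{−α,e}) = f(I)}`, valued in `[0,∞]`. -/
noncomputable def lTol {ι : Type*} [DecidableEq ι] (t : ObjType) (c : ι → ℝ)
    (D : Finset (Finset ι)) (e : ι) : ℝ≥0∞ :=
  sSup (ENNReal.ofReal '' {a : ℝ | decOK t c e a ∧
    optVal t (fun x => if x = e then c x - a else c x) D = optVal t c D})

/-- New regular set lower tolerance `l'(I,E)`, valued in `[0,∞]`. -/
noncomputable def lTolSet {ι : Type*} [DecidableEq ι] (t : ObjType) (c : ι → ℝ)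
    (D : Finset (Finset ι)) (E : Finset ι) : ℝ≥0∞ :=
  sSup (ENNReal.ofReal '' {a : ℝ |
    ∃ α : ι → ℝ, (∀ x ∈ E, decOK t c x (α x)) ∧ (∀ x ∉ E, α x = 0) ∧
      a = ∑ x ∈ E, α x ∧ optVal t (fun x => c x - α x) D = optVal t c D})

/-- New reverse set lower tolerance `l_b'(I,E)`, valued in `[0,∞]` (`inf ∅ = ∞`). -/
noncomputable def lTolSetRev {ι : Type*} [DecidableEq ι] (t : ObjType) (c : ι → ℝ)
    (D : Finset (Finset ι)) (E : Finset ι) : ℝ≥0∞ :=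
  sInf (ENNReal.ofReal '' {a : ℝ |
    ∃ α : ι → ℝ, (∀ x ∈ E, decOK t c x (α x)) ∧ (∀ x ∉ E, α x = 0) ∧
      a = ∑ x ∈ E, α x ∧ optVal t (fun x => c x - α x) D < optVal t c D})

/-!
Lowering `c e` by `a` multiplies the cost of every `S ∋ e` by `(c e - a) / c e` and leaves the
other costs unchanged. Since all costs are positive, the optimum cannot increase, and it stays
equal to `f(I)` exactly when `f(I) ≤ (c e - a) / c e * f(D⁺(e))`, i.e. when
`a ≤ (f(D⁺(e)) - f(I)) / f(D⁺(e)) * c e`. So the admissible decrements form the interval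
`[0, (f(D⁺(e)) - f(I)) / f(D⁺(e)) * c e]`, or all of `[0, c e)` when no feasible solution contains
`e`, and `l'(I, e)` is the right end point.
-/

open Finset

lemma Finset.forall_mem_apply_iff_inf' {α β : Type*} [LinearOrder α] {s : Finset β}
    (hs : s.Nonempty) (f : β → α) {P : α → Prop} (hP : Monotone P) :
    (∀ b ∈ s, P (f b)) ↔ P (s.inf' hs f) := by
  refine ⟨fun H => ?_, fun H b hb => hP (inf'_le f hb) H⟩
  obtain ⟨b, hb, hbf⟩ := exists_mem_eq_inf' hs f
  exact hbf ▸ H b hb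

lemma ENNReal.sSup_image_ofReal {A : Set ℝ} (hne : A.Nonempty) (hbdd : BddAbove A) :
    sSup (ENNReal.ofReal '' A) = ENNReal.ofReal (sSup A) :=
  (ENNReal.ofReal_mono.map_csSup_of_continuousAt
    ENNReal.continuous_ofReal.continuousAt hne hbdd).symm

lemma le_sub_div_mul_iff_le_sub_div_mul {y a b x : ℝ} (hb : 0 < b) (hx : 0 < x) :
    y ≤ (b - a) / b * x ↔ a ≤ (x - y) / x * b := by
  rw [div_mul_eq_mul_div, le_div_iff₀ hb, div_mul_eq_mul_div, le_div_iff₀ hx]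
  constructor <;> intro h <;> linarith

section CMP

variable {ι : Type*} {t : ObjType} {c c' : ι → ℝ} {D : Finset (Finset ι)} {S : Finset ι}

lemma objCost_congr (h : ∀ x ∈ S, c x = c' x) : objCost t c S = objCost t c' S := by
  cases t with
  | sum => exact sum_congr rfl h
  | prod => exact prod_congr rfl h
  | bottleneck =>
    simp only [objCost]
    split_ifs with hS
    · exact sup'_congr hS rfl h
    · rfl

lemma optVal_congr (h : ∀ S ∈ D, objCost t c S = objCost t c' S) :
    optVal t c D = optVal t c' D := by
  unfold optVal
  split_ifs with hD
  · exact inf'_congr hD rfl h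
  · rfl

lemma optVal_mono (h : ∀ S ∈ D, objCost t c' S ≤ objCost t c S) :
    optVal t c' D ≤ optVal t c D := by
  unfold optVal
  split_ifs with hD
  · exact le_inf'_iff hD _ |>.mpr fun S hS => (inf'_le _ hS).trans (h S hS)
  · rfl

lemma optVal_le (hS : S ∈ D) : optVal t c D ≤ objCost t c S := by
  rw [optVal, dif_pos ⟨S, hS⟩]
  exact inf'_le _ hS

lemma le_optVal_iff (hD : D.Nonempty) {y : ℝ} :
    y ≤ optVal t c D ↔ ∀ S ∈ D, y ≤ objCost t c S := by
  rw [optVal, dif_pos hD, le_inf'_iff]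

lemma objCost_prod_pos (hpos : ∀ x, 0 < c x) : 0 < objCost .prod c S :=
  prod_pos fun _ _ => hpos _

lemma optVal_prod_pos (hD : D.Nonempty) (hpos : ∀ x, 0 < c x) : 0 < optVal .prod c D := by
  rw [optVal, dif_pos hD, lt_inf'_iff]
  exact fun _ _ => objCost_prod_pos hpos

variable [DecidableEq ι] {e : ι} {a : ℝ}

lemma objCost_sub_of_notMem (he : e ∉ S) :
    objCost t (fun x => if x = e then c x - a else c x) S = objCost t c S :=
  objCost_congr fun _ hx => if_neg (ne_of_mem_of_not_mem hx he)

lemma objCost_prod_sub_of_mem (he : e ∈ S) (hce : c e ≠ 0) :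
    objCost .prod (fun x => if x = e then c x - a else c x) S
      = (c e - a) / c e * objCost .prod c S := by
  simp only [objCost]
  rw [← mul_prod_erase S _ he, ← mul_prod_erase S c he, if_pos rfl,
    prod_congr rfl fun x hx => if_neg (ne_of_mem_erase hx)]
  field_simp

lemma optVal_prod_sub_eq_iff_forall (hpos : ∀ x, 0 < c x) (ha : 0 ≤ a) :
    optVal .prod (fun x => if x = e then c x - a else c x) D = optVal .prod c D ↔
      ∀ S ∈ D, e ∈ S → optVal .prod c D ≤ (c e - a) / c e * objCost .prod c S := by
  rcases D.eq_empty_or_nonempty with rfl | hD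
  · simp [optVal]
  have hcost : ∀ S, e ∈ S → objCost .prod (fun x => if x = e then c x - a else c x) S
      = (c e - a) / c e * objCost .prod c S := fun S he =>
    objCost_prod_sub_of_mem he (hpos e).ne'
  have hle : optVal .prod (fun x => if x = e then c x - a else c x) D ≤ optVal .prod c D := by
    refine optVal_mono fun S _ => ?_
    by_cases he : e ∈ S
    · have hfactor : (c e - a) / c e ≤ 1 := div_le_one_of_le₀ (by linarith) (hpos e).le
      rw [hcost S he]
      exact mul_le_of_le_one_left (objCost_prod_pos hpos).le hfactor
    · exact (objCost_sub_of_notMem he).le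
  rw [le_antisymm_iff, and_iff_right hle, le_optVal_iff hD]
  refine forall₂_congr fun S hS => ⟨fun h he => hcost S he ▸ h, fun h => ?_⟩
  by_cases he : e ∈ S
  · exact hcost S he ▸ h he
  · exact (objCost_sub_of_notMem he).symm ▸ optVal_le hS

lemma optVal_prod_sub_eq_iff (hpos : ∀ x, 0 < c x) (h : (D.filter fun S => e ∈ S).Nonempty)
    (ha₀ : 0 ≤ a) (ha : a ≤ c e) :
    optVal .prod (fun x => if x = e then c x - a else c x) D = optVal .prod c D ↔
      a ≤ ((D.filter fun S => e ∈ S).inf' h (objCost .prod c) - optVal .prod c D)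
        / (D.filter fun S => e ∈ S).inf' h (objCost .prod c) * c e := by
  have hmono : Monotone fun y => optVal .prod c D ≤ (c e - a) / c e * y := fun y z hyz hy =>
    hy.trans (mul_le_mul_of_nonneg_left hyz (div_nonneg (by linarith) (hpos e).le))
  have hFp : 0 < (D.filter fun S => e ∈ S).inf' h (objCost .prod c) :=
    (lt_inf'_iff h).mpr fun _ _ => objCost_prod_pos hpos
  rw [optVal_prod_sub_eq_iff_forall hpos ha₀, ← le_sub_div_mul_iff_le_sub_div_mul (hpos e) hFp,
    ← forall_mem_apply_iff_inf' h _ hmono]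
  simp only [mem_filter, and_imp]

lemma lTol_prod_of_nonempty (hpos : ∀ x, 0 < c x) (h : (D.filter fun S => e ∈ S).Nonempty) :
    lTol .prod c D e = ENNReal.ofReal
      (((D.filter fun S => e ∈ S).inf' h (objCost .prod c) - optVal .prod c D)
        / (D.filter fun S => e ∈ S).inf' h (objCost .prod c) * c e) := by
  set Fp := (D.filter fun S => e ∈ S).inf' h (objCost .prod c)
  set F := optVal .prod c D
  have hD : D.Nonempty := h.mono (filter_subset _ D)
  have hF : 0 < F := optVal_prod_pos hD hpos
  have hFFp : F ≤ Fp := (le_inf'_iff h _).mpr fun S hS => optVal_le (mem_filter.mp hS).1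
  have hFp : 0 < Fp := hF.trans_le hFFp
  have hT₀ : 0 ≤ (Fp - F) / Fp * c e :=
    mul_nonneg (div_nonneg (sub_nonneg.mpr hFFp) hFp.le) (hpos e).le
  have hT : (Fp - F) / Fp * c e < c e :=
    mul_lt_of_lt_one_left (hpos e) ((div_lt_one hFp).mpr (by linarith))
  have hset : {a : ℝ | decOK .prod c e a ∧
      optVal .prod (fun x => if x = e then c x - a else c x) D = F}
      = Set.Icc 0 ((Fp - F) / Fp * c e) := by
    ext a
    simp only [decOK, Set.mem_ofPred_eq, Set.mem_Icc, forall_const]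
    constructor
    · rintro ⟨⟨ha₀, ha⟩, hopt⟩
      exact ⟨ha₀, (optVal_prod_sub_eq_iff hpos h ha₀ ha.le).mp hopt⟩
    · rintro ⟨ha₀, haT⟩
      have ha := haT.trans_lt hT
      exact ⟨⟨ha₀, ha⟩, (optVal_prod_sub_eq_iff hpos h ha₀ ha.le).mpr haT⟩
  rw [lTol, hset, ENNReal.sSup_image_ofReal (Set.nonempty_Icc.mpr hT₀) bddAbove_Icc,
    csSup_Icc hT₀]

lemma lTol_prod_of_not_nonempty (hpos : ∀ x, 0 < c x) (h : ¬(D.filter fun S => e ∈ S).Nonempty) :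
    lTol .prod c D e = ENNReal.ofReal (c e) := by
  have hunchanged : ∀ a, optVal .prod (fun x => if x = e then c x - a else c x) D
      = optVal .prod c D := fun a =>
    optVal_congr fun S hS => objCost_sub_of_notMem fun he => h ⟨S, mem_filter.mpr ⟨hS, he⟩⟩
  have hset : {a : ℝ | decOK .prod c e a ∧
      optVal .prod (fun x => if x = e then c x - a else c x) D = optVal .prod c D}
      = Set.Ico 0 (c e) := by
    ext a
    simp [decOK, hunchanged]
  rw [lTol, hset, ENNReal.sSup_image_ofReal (Set.nonempty_Ico.mpr (hpos e)) bddAbove_Ico,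
    csSup_Ico (hpos e)]

end CMP

theorem lsi_formula_prod_general {ι : Type*} [DecidableEq ι]
    (c : ι → ℝ) (D : Finset (Finset ι))
    (hpos : ∀ x, 0 < c x) :
    ∀ e : ι, lTol ObjType.prod c D e =
      if h : (D.filter fun S => e ∈ S).Nonempty then
        ENNReal.ofReal
          ((((D.filter fun S => e ∈ S).inf' h (objCost ObjType.prod c)
              - optVal ObjType.prod c D)
            / ((D.filter fun S => e ∈ S).inf' h (objCost ObjType.prod c))) * c e)
      else ENNReal.ofReal (c e) := by
  intro e
  split_ifs with h
  · exact lTol_prod_of_nonempty hpos h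
  · exact lTol_prod_of_not_nonempty hpos h

/-- Theorem 5(c): for a product objective,
`l'(I,e) = ((f(D⁺(e)) − f(I)) / f(D⁺(e))) · c(e)`, interpreted as `c(e)`
when `D⁺(e) = ∅` (so that `f(D⁺(e)) = ∞`). -/
theorem lsi_formula_prod {ι : Type*} [Fintype ι] [DecidableEq ι]
    (c : ι → ℝ) (D : Finset (Finset ι))
    (hD : D.Nonempty) (hSne : ∀ S ∈ D, S.Nonempty)
    (hpos : ∀ x, 0 < c x) :
    ∀ e : ι, lTol ObjType.prod c D e =
      if h : (D.filter fun S => e ∈ S).Nonempty then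
        ENNReal.ofReal
          ((((D.filter fun S => e ∈ S).inf' h (objCost ObjType.prod c)
              - optVal ObjType.prod c D)
            / ((D.filter fun S => e ∈ S).inf' h (objCost ObjType.prod c))) * c e)
      else ENNReal.ofReal (c e) :=
  lsi_formula_prod_general c D hpos
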